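/- arXiv:0912.1479 — 2 statements merged into one kernel-verified Lean document; each statement's English description precedes it below -/
import Mathlib

section
/- Let k : ℝ^d × ℝ^d → ℝ be a continuous symmetric positive semidefinite kernel, let (x_n)_{n≥1} be a sequence in ℝ^d, and let x ∈ ℝ^d. If x belongs to the closure of the set {x_n : n ≥ 1}, then the kriging variance σ²(x; x₁,…,x_n) converges to 0 as n → ∞. -/
open Filter

/-- The quadratic form `Qₙ(λ) = k(x,x) − 2 Σᵢ λᵢ k(x,xᵢ) + Σᵢⱼ λᵢλⱼ k(xᵢ,xⱼ)`. -/
noncomputable def krigQ {d : ℕ}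
    (k : EuclideanSpace ℝ (Fin d) → EuclideanSpace ℝ (Fin d) → ℝ)
    (x : EuclideanSpace ℝ (Fin d)) {n : ℕ}
    (pts : Fin n → EuclideanSpace ℝ (Fin d)) (lam : Fin n → ℝ) : ℝ :=
  k x x - 2 * ∑ i, lam i * k x (pts i)
    + ∑ i, ∑ j, lam i * lam j * k (pts i) (pts j)

/-- The kriging variance `σ²(x; x₁,…,x_n) = inf_{λ ∈ ℝⁿ} Qₙ(λ)`. -/
noncomputable def krigVar {d : ℕ}
    (k : EuclideanSpace ℝ (Fin d) → EuclideanSpace ℝ (Fin d) → ℝ)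
    (x : EuclideanSpace ℝ (Fin d)) {n : ℕ}
    (pts : Fin n → EuclideanSpace ℝ (Fin d)) : ℝ :=
  ⨅ lam : Fin n → ℝ, krigQ k x pts lam

/-!
Putting all the weight on one design point, `λ = eᵢ`, shows
`σ²(x; x₁,…,xₙ) ≤ k(x,x) − 2 k(x,xᵢ) + k(xᵢ,xᵢ)` for every `i < n`. The right-hand side is a
continuous function of `xᵢ` vanishing at `xᵢ = x` (the squared distance of `x` and `xᵢ` in the
feature space of `k`), so it is small for some `xᵢ` near `x`. On the other hand `Qₙ(λ)` is the
form of `k` at the points `(x, x₁,…,xₙ)` with coefficients `(1, −λ)`, hence `σ² ≥ 0`.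
-/

theorem exists_mem_kernel_sub_lt_of_mem_closure {X : Type*} [TopologicalSpace X]
    {k : X → X → ℝ} (hk : Continuous fun p : X × X => k p.1 p.2) {s : Set X} {x : X}
    (hx : x ∈ closure s) {ε : ℝ} (hε : 0 < ε) :
    ∃ y ∈ s, k x x - 2 * k x y + k y y < ε := by
  have hcont : Continuous fun y => k x x - 2 * k x y + k y y := by
    have hkx : Continuous (k x) := hk.comp (continuous_const.prodMk continuous_id)
    have hdiag : Continuous fun y => k y y := hk.comp (continuous_id.prodMk continuous_id)
    fun_prop
  have hxε : k x x - 2 * k x x + k x x < ε := by linarith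
  obtain ⟨y, hyε, hys⟩ := mem_closure_iff.mp hx _ (isOpen_lt hcont continuous_const) hxε
  exact ⟨y, hys, hyε⟩

section

variable {d : ℕ} (k : EuclideanSpace ℝ (Fin d) → EuclideanSpace ℝ (Fin d) → ℝ)

theorem krigQ_single (x : EuclideanSpace ℝ (Fin d)) {n : ℕ}
    (pts : Fin n → EuclideanSpace ℝ (Fin d)) (i : Fin n) :
    krigQ k x pts (Pi.single i 1) = k x x - 2 * k x (pts i) + k (pts i) (pts i) := by
  simp [krigQ, Pi.single_apply]

variable {k} (hk_symm : ∀ x y, k x y = k y x)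
  (hk_psd : ∀ (n : ℕ) (pts : Fin n → EuclideanSpace ℝ (Fin d)) (c : Fin n → ℝ),
    0 ≤ ∑ i, ∑ j, c i * c j * k (pts i) (pts j))
include hk_symm hk_psd

theorem krigQ_nonneg (x : EuclideanSpace ℝ (Fin d)) {n : ℕ}
    (pts : Fin n → EuclideanSpace ℝ (Fin d)) (lam : Fin n → ℝ) :
    0 ≤ krigQ k x pts lam := by
  have h := hk_psd (n + 1) (Fin.cons x pts) (Fin.cons 1 (-lam))
  simp only [Fin.sum_univ_succ, Fin.cons_zero, Fin.cons_succ, Pi.neg_apply] at h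
  convert h using 1
  simp only [krigQ, hk_symm _ x, Finset.sum_add_distrib, neg_mul, mul_neg, neg_neg, one_mul,
    mul_one, Finset.sum_neg_distrib]
  ring

theorem krigVar_nonneg (x : EuclideanSpace ℝ (Fin d)) {n : ℕ}
    (pts : Fin n → EuclideanSpace ℝ (Fin d)) :
    0 ≤ krigVar k x pts :=
  Real.iInf_nonneg (krigQ_nonneg hk_symm hk_psd x pts)

theorem krigVar_le_krigQ (x : EuclideanSpace ℝ (Fin d)) {n : ℕ}
    (pts : Fin n → EuclideanSpace ℝ (Fin d)) (lam : Fin n → ℝ) :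
    krigVar k x pts ≤ krigQ k x pts lam :=
  ciInf_le ⟨0, Set.forall_mem_range.2 (krigQ_nonneg hk_symm hk_psd x pts)⟩ lam

end

/-- If `k` is a continuous symmetric positive semidefinite kernel and `x` is in the
closure of `{xₙ : n ≥ 1}`, then the kriging variance `σ²(x; x₁,…,x_n)` tends to `0`. -/
theorem kriging_variance_tendsto_zero_of_mem_closure {d : ℕ}
    (k : EuclideanSpace ℝ (Fin d) → EuclideanSpace ℝ (Fin d) → ℝ)
    (hk_cont : Continuous fun p : EuclideanSpace ℝ (Fin d) × EuclideanSpace ℝ (Fin d) =>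
      k p.1 p.2)
    (hk_symm : ∀ x y, k x y = k y x)
    (hk_psd : ∀ (n : ℕ) (pts : Fin n → EuclideanSpace ℝ (Fin d)) (c : Fin n → ℝ),
      0 ≤ ∑ i, ∑ j, c i * c j * k (pts i) (pts j))
    (xs : ℕ → EuclideanSpace ℝ (Fin d)) (x : EuclideanSpace ℝ (Fin d))
    (hx : x ∈ closure (Set.range xs)) :
    Tendsto (fun n : ℕ => krigVar k x (fun i : Fin n => xs i)) atTop (nhds 0) := by
  refine tendsto_order.2 ⟨fun a ha => Eventually.of_forall fun n =>
    ha.trans_le (krigVar_nonneg hk_symm hk_psd x _), fun ε hε => ?_⟩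
  obtain ⟨_, ⟨i, rfl⟩, hi⟩ := exists_mem_kernel_sub_lt_of_mem_closure hk_cont hx hε
  filter_upwards [eventually_gt_atTop i] with n hin
  calc krigVar k x (fun j : Fin n => xs j)
      ≤ krigQ k x (fun j : Fin n => xs j) (Pi.single ⟨i, hin⟩ 1) :=
        krigVar_le_krigQ hk_symm hk_psd x _ _
    _ = k x x - 2 * k x (xs i) + k (xs i) (xs i) := krigQ_single k x _ _
    _ < ε := hi
end

section
/- Let S : ℝ^d → [0,∞) be integrable with S(u)(1+‖u‖^r) ≥ C for almost every u, for some C > 0 and r ∈ ℕ, and let k(x,y) = ∫_{ℝ^d} cos(⟨u, x−y⟩) S(u) du. Then for every sequence (x_n)_{n≥1} in ℝ^d and every x ∈ ℝ^d: if the kriging variance σ²(x; x₁,…,x_n) tends to 0 as n → ∞, then x belongs to the closure of {x_n : n ≥ 1}. (That is, a process with such a spectral density has the No-Empty-Ball property.) -/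
/-!
Expanding the squares, `Qₙ(λ) = ∫ |e^{i⟪u,x⟫} - ∑ λᵢ e^{i⟪u,xᵢ⟫}|² S(u) du`. If every `xᵢ` stays
at distance `≥ ε` from `x`, take a Schwartz function `ψ` whose transform `t ↦ ∫ e^{i⟪u,t⟫} ψ(u) du`
is a bump equal to `1` at `x` and vanishing off the `ε`-ball around `x`. Pairing `ψ` with the
trigonometric polynomial gives `1`, so Cauchy–Schwarz with weights `S` and `1/S` bounds `Qₙ(λ)`
below by `(1 + ∫ |ψ|²/S)⁻¹`, independently of `n` and `λ`; this is finite because `ψ` decays faster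
than any polynomial while `1/S` grows at most polynomially. Hence the kriging variance at `x` stays
away from `0`.
-/

open MeasureTheory Filter
open scoped RealInnerProductSpace

open Complex Real
open scoped FourierTransform SchwartzMap

theorem Complex.real_inner_exp_mul_I (α β : ℝ) :
    ⟪cexp (α * I), cexp (β * I)⟫ = Real.cos (α - β) := by
  rw [Complex.inner, ← Complex.exp_conj, ← Complex.exp_add, map_mul, conj_ofReal, conj_I,
    show (β : ℂ) * I + α * -I = ((β - α : ℝ) : ℂ) * I by push_cast; ring,
    exp_ofReal_mul_I_re, ← Real.cos_neg, neg_sub]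

theorem two_mul_le_mul_sq_mul_add_sq_div {a b s t : ℝ} (hs : 0 < s) (ht : 0 < t) :
    2 * (a * b) ≤ t * (a ^ 2 * s) + t⁻¹ * (b ^ 2 / s) := by
  have key : t * (a ^ 2 * s) + t⁻¹ * (b ^ 2 / s) - 2 * (a * b)
      = (t * s * a - b) ^ 2 / (t * s) := by
    field_simp
    ring
  rw [← sub_nonneg, key]
  positivity

theorem inv_add_one_le_integral_norm_sq_mul {α : Type*} [MeasurableSpace α] {μ : Measure α}
    {S : α → ℝ} (hS : ∀ᵐ u ∂μ, 0 < S u) {H ψ : α → ℂ}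
    (hH : Integrable (fun u => ‖H u‖ ^ 2 * S u) μ) (hψ : Integrable (fun u => ‖ψ u‖ ^ 2 / S u) μ)
    (hHψ : Integrable (fun u => H u * ψ u) μ) (h_one : ∫ u, H u * ψ u ∂μ = 1) :
    (∫ u, ‖ψ u‖ ^ 2 / S u ∂μ + 1)⁻¹ ≤ ∫ u, ‖H u‖ ^ 2 * S u ∂μ := by
  set A := ∫ u, ‖ψ u‖ ^ 2 / S u ∂μ
  set Q := ∫ u, ‖H u‖ ^ 2 * S u ∂μ
  have hA : 0 ≤ A := integral_nonneg_of_ae <| hS.mono fun u hu => by positivity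
  have ht : 0 < A + 1 := by linarith
  have hpoint : ∀ᵐ u ∂μ, 2 * ‖H u * ψ u‖
      ≤ (A + 1) * (‖H u‖ ^ 2 * S u) + (A + 1)⁻¹ * (‖ψ u‖ ^ 2 / S u) :=
    hS.mono fun u hu => norm_mul (H u) (ψ u) ▸ two_mul_le_mul_sq_mul_add_sq_div hu ht
  have htwo : 2 ≤ (A + 1) * Q + (A + 1)⁻¹ * A := calc
    2 = 2 * ‖∫ u, H u * ψ u ∂μ‖ := by rw [h_one, norm_one, mul_one]
    _ ≤ ∫ u, 2 * ‖H u * ψ u‖ ∂μ := by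
      rw [integral_const_mul]
      exact mul_le_mul_of_nonneg_left (norm_integral_le_integral_norm _) zero_le_two
    _ ≤ ∫ u, (A + 1) * (‖H u‖ ^ 2 * S u) + (A + 1)⁻¹ * (‖ψ u‖ ^ 2 / S u) ∂μ :=
      integral_mono_ae (hHψ.norm.const_mul 2) ((hH.const_mul _).add (hψ.const_mul _)) hpoint
    _ = (A + 1) * Q + (A + 1)⁻¹ * A := by
      rw [integral_add (hH.const_mul _) (hψ.const_mul _), integral_const_mul, integral_const_mul]
  have hA_le : (A + 1)⁻¹ * A ≤ 1 := by
    rw [inv_mul_le_iff₀ ht]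
    linarith
  rw [inv_le_iff_one_le_mul₀' ht]
  linarith

section Fourier

variable {V : Type*} [NormedAddCommGroup V] [InnerProductSpace ℝ V] [FiniteDimensional ℝ V]
  [MeasurableSpace V] [BorelSpace V]

-- The factor `(2 * π)⁻¹` comes from Mathlib's normalisation `𝐞 t = exp (2 π i t)` of the
-- Fourier character.
theorem SchwartzMap.integral_exp_inner_mul_fourier (φ : 𝓢(V, ℂ)) (t : V) :
    ∫ u, cexp (⟪u, t⟫ * I) * 𝓕 φ u = φ ((2 * π)⁻¹ • t) := by
  conv_rhs => rw [← FourierPair.fourierInv_fourier_eq (F := 𝓢(V, ℂ)) φ, SchwartzMap.fourierInv_coe,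
    Real.fourierInv_eq']
  congr with u
  rw [real_inner_smul_right, mul_inv_cancel_left₀ (by positivity), smul_eq_mul,
    SchwartzMap.fourier_coe]

theorem exists_schwartzMap_integral_exp_inner_mul (x : V) {ε : ℝ} (hε : 0 < ε) :
    ∃ ψ : 𝓢(V, ℂ), ∫ u, cexp (⟪u, x⟫ * I) * ψ u = 1 ∧
      ∀ y, ε ≤ dist y x → ∫ u, cexp (⟪u, y⟫ * I) * ψ u = 0 := by
  let f : ContDiffBump ((2 * π)⁻¹ • x) := ⟨(2 * π)⁻¹ * ε / 2, (2 * π)⁻¹ * ε, by positivity,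
    half_lt_self (by positivity)⟩
  let φ : 𝓢(V, ℂ) := HasCompactSupport.toSchwartzMap
    (f.hasCompactSupport.comp_left (g := ((↑) : ℝ → ℂ)) ofReal_zero)
    (ofRealCLM.contDiff.comp f.contDiff)
  refine ⟨𝓕 φ, ?_, fun y hy => ?_⟩
  · rw [SchwartzMap.integral_exp_inner_mul_fourier]
    change ((f _ : ℝ) : ℂ) = 1
    rw [f.one_of_mem_closedBall (Metric.mem_closedBall_self f.rIn_pos.le), ofReal_one]
  · rw [SchwartzMap.integral_exp_inner_mul_fourier]
    have hfar : f.rOut ≤ dist ((2 * π)⁻¹ • y) ((2 * π)⁻¹ • x) := by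
      rw [dist_smul₀, Real.norm_of_nonneg (by positivity)]
      exact mul_le_mul_of_nonneg_left hy (by positivity)
    change ((f _ : ℝ) : ℂ) = 0
    rw [f.zero_of_le_dist hfar, ofReal_zero]

theorem SchwartzMap.integrable_norm_sq_div (ψ : 𝓢(V, ℂ)) {S : V → ℝ}
    (hS : AEStronglyMeasurable S) {C : ℝ} (hC : 0 < C) {r : ℕ}
    (hS_low : ∀ᵐ u, C ≤ S u * (1 + ‖u‖ ^ r)) :
    Integrable (fun u => ‖ψ u‖ ^ 2 / S u) := by
  set B := SchwartzMap.seminorm ℝ 0 0 ψ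
  refine Integrable.mono' ((ψ.integrable.norm.add (ψ.integrable_pow_mul volume r)).const_mul
    (B / C)) ((ψ.continuous.norm.pow 2).aemeasurable.div hS.aemeasurable).aestronglyMeasurable ?_
  filter_upwards [hS_low] with u hu
  have hSu : 0 < S u := pos_of_mul_pos_left (hC.trans_le hu) (by positivity)
  rw [Real.norm_of_nonneg (by positivity)]
  calc ‖ψ u‖ ^ 2 / S u ≤ ‖ψ u‖ ^ 2 * (1 + ‖u‖ ^ r) / C := by
        rw [div_le_div_iff₀ hSu hC]
        nlinarith [mul_le_mul_of_nonneg_left hu (sq_nonneg ‖ψ u‖)]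
    _ = ‖ψ u‖ * (‖ψ u‖ + ‖u‖ ^ r * ‖ψ u‖) / C := by ring
    _ ≤ B * (‖ψ u‖ + ‖u‖ ^ r * ‖ψ u‖) / C := by
        gcongr
        exact ψ.norm_le_seminorm ℝ u
    _ = B / C * (‖ψ u‖ + ‖u‖ ^ r * ‖ψ u‖) := by ring

theorem exists_pos_le_integral_norm_sq_mul {S : V → ℝ} (hS_int : Integrable S) {C : ℝ}
    (hC : 0 < C) {r : ℕ} (hS_low : ∀ᵐ u, C ≤ S u * (1 + ‖u‖ ^ r)) (x : V) {ε : ℝ} (hε : 0 < ε) :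
    ∃ c > 0, ∀ {n : ℕ} (pts : Fin n → V), (∀ i, ε ≤ dist (pts i) x) → ∀ lam : Fin n → ℝ,
      c ≤ ∫ u, ‖cexp (⟪u, x⟫ * I) - ∑ i, lam i • cexp (⟪u, pts i⟫ * I)‖ ^ 2 * S u := by
  obtain ⟨ψ, hψ_x, hψ_far⟩ := exists_schwartzMap_integral_exp_inner_mul x hε
  have hS_pos : ∀ᵐ u, 0 < S u :=
    hS_low.mono fun u hu => pos_of_mul_pos_left (hC.trans_le hu) (by positivity)
  have hψ_int := ψ.integrable_norm_sq_div hS_int.aestronglyMeasurable hC hS_low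
  have hA : 0 ≤ ∫ u, ‖ψ u‖ ^ 2 / S u :=
    integral_nonneg_of_ae <| hS_pos.mono fun u hu => by positivity
  refine ⟨((∫ u, ‖ψ u‖ ^ 2 / S u) + 1)⁻¹, inv_pos.mpr (by linarith), fun pts hpts lam => ?_⟩
  have hcont : ∀ y : V, Continuous fun u : V => cexp (⟪u, y⟫ * I) := by fun_prop
  have hexp : ∀ y : V, Integrable fun u => cexp (⟪u, y⟫ * I) * ψ u := fun y =>
    ψ.integrable.bdd_mul (hcont y).aestronglyMeasurable
      (ae_of_all _ fun u => (norm_exp_ofReal_mul_I _).le)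
  set H : V → ℂ := fun u => cexp (⟪u, x⟫ * I) - ∑ i, lam i • cexp (⟪u, pts i⟫ * I)
  have hH_bdd : ∀ u, ‖H u‖ ≤ 1 + ∑ i, |lam i| := fun u => calc
    ‖H u‖ ≤ ‖cexp (⟪u, x⟫ * I)‖ + ∑ i, ‖lam i • cexp (⟪u, pts i⟫ * I)‖ :=
      (norm_sub_le _ _).trans (add_le_add_right (norm_sum_le _ _) _)
    _ = 1 + ∑ i, |lam i| := by
      simp only [norm_smul, norm_exp_ofReal_mul_I, Real.norm_eq_abs, mul_one]
  have hH_cont : Continuous H := by fun_prop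
  have hHψ : (fun u => H u * ψ u) =
      fun u => cexp (⟪u, x⟫ * I) * ψ u - ∑ i, lam i • (cexp (⟪u, pts i⟫ * I) * ψ u) := by
    ext u
    simp only [H, sub_mul, Finset.sum_mul, smul_mul_assoc]
  have hterm : ∀ i, Integrable fun u => lam i • (cexp (⟪u, pts i⟫ * I) * ψ u) :=
    fun i => (hexp (pts i)).smul (lam i)
  have hsum : Integrable fun u => ∑ i, lam i • (cexp (⟪u, pts i⟫ * I) * ψ u) :=
    integrable_finsetSum _ fun i _ => hterm i
  apply inv_add_one_le_integral_norm_sq_mul (H := H) hS_pos _ hψ_int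
  · rw [hHψ]
    exact (hexp x).sub hsum
  · rw [hHψ, integral_sub (hexp x) hsum, integral_finsetSum _ fun i _ => hterm i, hψ_x]
    simp only [integral_smul, hψ_far _ (hpts _), smul_zero, Finset.sum_const_zero, sub_zero]
  · refine hS_int.bdd_mul (c := (1 + ∑ i, |lam i|) ^ 2) (hH_cont.norm.pow 2).aestronglyMeasurable
      (ae_of_all _ fun u => ?_)
    rw [norm_pow, norm_norm]
    exact pow_le_pow_left₀ (norm_nonneg _) (hH_bdd u) 2

end Fourier

section Kriging

variable {d : ℕ}

theorem krigQ_inner_eq_norm_sq {F : Type*} [NormedAddCommGroup F] [InnerProductSpace ℝ F]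
    (φ : EuclideanSpace ℝ (Fin d) → F) (x : EuclideanSpace ℝ (Fin d)) {n : ℕ}
    (pts : Fin n → EuclideanSpace ℝ (Fin d)) (lam : Fin n → ℝ) :
    krigQ (fun a b => ⟪φ a, φ b⟫) x pts lam = ‖φ x - ∑ i, lam i • φ (pts i)‖ ^ 2 := by
  rw [norm_sub_sq_real, ← real_inner_self_eq_norm_sq, ← real_inner_self_eq_norm_sq]
  simp only [sum_inner, real_inner_smul_left]
  simp only [krigQ, inner_sum, real_inner_smul_right, Finset.mul_sum, mul_assoc]

theorem krigQ_mul_const (k : EuclideanSpace ℝ (Fin d) → EuclideanSpace ℝ (Fin d) → ℝ) (c : ℝ)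
    (x : EuclideanSpace ℝ (Fin d)) {n : ℕ}
    (pts : Fin n → EuclideanSpace ℝ (Fin d)) (lam : Fin n → ℝ) :
    krigQ (fun a b => k a b * c) x pts lam = krigQ k x pts lam * c := by
  simp only [krigQ, sub_mul, add_mul, mul_assoc, Finset.sum_mul]

theorem krigQ_integral {α : Type*} [MeasurableSpace α] {μ : Measure α}
    (K : α → EuclideanSpace ℝ (Fin d) → EuclideanSpace ℝ (Fin d) → ℝ)
    (hK : ∀ a b, Integrable (fun u => K u a b) μ)
    (x : EuclideanSpace ℝ (Fin d)) {n : ℕ}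
    (pts : Fin n → EuclideanSpace ℝ (Fin d)) (lam : Fin n → ℝ) :
    krigQ (fun a b => ∫ u, K u a b ∂μ) x pts lam = ∫ u, krigQ (K u) x pts lam ∂μ := by
  have hlin : Integrable (fun u => 2 * ∑ i, lam i * K u x (pts i)) μ :=
    (integrable_finsetSum _ fun i _ => (hK _ _).const_mul _).const_mul 2
  have hdiff : Integrable (fun u => K u x x - 2 * ∑ i, lam i * K u x (pts i)) μ :=
    (hK x x).sub hlin
  have hquad : ∀ i, Integrable (fun u => ∑ j, lam i * lam j * K u (pts i) (pts j)) μ :=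
    fun i => integrable_finsetSum _ fun j _ => (hK _ _).const_mul _
  dsimp only [krigQ]
  rw [integral_add hdiff (integrable_finsetSum _ fun i _ => hquad i),
    integral_sub (hK x x) hlin, integral_const_mul,
    integral_finsetSum _ fun i _ => (hK _ _).const_mul _,
    integral_finsetSum _ fun i _ => hquad i]
  simp only [integral_finsetSum _ fun j _ => (hK _ _).const_mul _, integral_const_mul]

theorem krigQ_eq_integral_norm_sq_mul {S : EuclideanSpace ℝ (Fin d) → ℝ} (hS_int : Integrable S)
    {k : EuclideanSpace ℝ (Fin d) → EuclideanSpace ℝ (Fin d) → ℝ}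
    (hk : ∀ x y, k x y = ∫ u, Real.cos ⟪u, x - y⟫ * S u)
    (x : EuclideanSpace ℝ (Fin d)) {n : ℕ}
    (pts : Fin n → EuclideanSpace ℝ (Fin d)) (lam : Fin n → ℝ) :
    krigQ k x pts lam
      = ∫ u, ‖cexp (⟪u, x⟫ * I) - ∑ i, lam i • cexp (⟪u, pts i⟫ * I)‖ ^ 2 * S u := by
  have hK : ∀ a b, Integrable fun u => Real.cos ⟪u, a - b⟫ * S u := fun a b =>
    hS_int.bdd_mul (by fun_prop) (ae_of_all _ fun u => Real.abs_cos_le_one _)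
  rw [show k = fun a b => ∫ u, Real.cos ⟪u, a - b⟫ * S u from funext₂ hk, krigQ_integral _ hK]
  congr with u
  have hcos : (fun a b => Real.cos ⟪u, a - b⟫)
      = fun a b => ⟪cexp (⟪u, a⟫ * I), cexp (⟪u, b⟫ * I)⟫ := by
    ext a b
    rw [Complex.real_inner_exp_mul_I, inner_sub_right]
  rw [krigQ_mul_const (fun a b => Real.cos ⟪u, a - b⟫), hcos, krigQ_inner_eq_norm_sq]

end Kriging

theorem NEB_of_spectral_condition_general {d : ℕ}
    (S : EuclideanSpace ℝ (Fin d) → ℝ)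
    (hS_int : Integrable S)
    (C : ℝ) (hC : 0 < C) (r : ℕ)
    (hS_low : ∀ᵐ u : EuclideanSpace ℝ (Fin d), C ≤ S u * (1 + ‖u‖ ^ r))
    (k : EuclideanSpace ℝ (Fin d) → EuclideanSpace ℝ (Fin d) → ℝ)
    (hk : ∀ x y, k x y = ∫ u, Real.cos ⟪u, x - y⟫ * S u)
    (xs : ℕ → EuclideanSpace ℝ (Fin d)) (x : EuclideanSpace ℝ (Fin d))
    (hvar : Tendsto (fun n : ℕ => krigVar k x (fun i : Fin n => xs i)) atTop (nhds 0)) :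
    x ∈ closure (Set.range xs) := by
  by_contra hx
  obtain ⟨ε, hε, hfar⟩ : ∃ ε > 0, ∀ y ∈ Set.range xs, ε ≤ dist x y := by
    simpa [Metric.mem_closure_iff] using hx
  obtain ⟨c, hc, hc_le⟩ := exists_pos_le_integral_norm_sq_mul hS_int hC hS_low x hε
  have hc_le_var : ∀ n : ℕ, c ≤ krigVar k x (fun i : Fin n => xs i) := fun n =>
    le_ciInf fun lam => krigQ_eq_integral_norm_sq_mul hS_int hk x _ lam ▸
      hc_le _ (fun i => dist_comm x (xs i) ▸ hfar _ ⟨i, rfl⟩) lam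
  linarith [ge_of_tendsto' hvar hc_le_var]

/-- A process whose spectral density satisfies the polynomial-growth condition has the
No-Empty-Ball property: if the kriging variance at `x` tends to `0`, then `x` is
adherent to the set of design points. -/
theorem NEB_of_spectral_condition {d : ℕ}
    (S : EuclideanSpace ℝ (Fin d) → ℝ)
    (hS_nonneg : ∀ u, 0 ≤ S u) (hS_int : Integrable S)
    (C : ℝ) (hC : 0 < C) (r : ℕ)
    (hS_low : ∀ᵐ u : EuclideanSpace ℝ (Fin d), C ≤ S u * (1 + ‖u‖ ^ r))
    (k : EuclideanSpace ℝ (Fin d) → EuclideanSpace ℝ (Fin d) → ℝ)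
    (hk : ∀ x y, k x y = ∫ u, Real.cos ⟪u, x - y⟫ * S u)
    (xs : ℕ → EuclideanSpace ℝ (Fin d)) (x : EuclideanSpace ℝ (Fin d))
    (hvar : Tendsto (fun n : ℕ => krigVar k x (fun i : Fin n => xs i)) atTop (nhds 0)) :
    x ∈ closure (Set.range xs) :=
  NEB_of_spectral_condition_general S hS_int C hC r hS_low k hk xs x hvar
end
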